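/- arXiv:1201.3984 — 11 statements merged into one kernel-verified Lean document; each statement's English description precedes it below -/
import Mathlib

section
/- For a finite graph G = (V,E) and a subset J of vertices, J is a transversal of the partition of successive differences for some chain of flats of G if and only if J is a partial transversal of the partition of successive differences for some maximal chain of flats of G. -/
/-! Refine the given chain to a maximal one, which exists because there are finitely many flats.
Each difference `Y_{t-1} \ Y_t` of the refinement lies inside a single difference `X_{i-1} \ X_i`
of the original chain, so the points of a transversal of the original chain fall into pairwise
distinct differences of the refinement and extend to a transversal of it. Conversely, a partial
transversal `J ⊆ {y_1, …, y_k}` is a transversal of the subchain `X_0 ⊃ X_{i_1} ⊃ … ⊃ X_{i_m}`,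
where `y_{i_1}, …, y_{i_m}` are the points of `J`. -/

/-- `St(W)`: the set of vertices adjacent to every vertex of `W` (so `St(∅) = V`). -/
def starW {V : Type*} (G : SimpleGraph V) (W : Set V) : Set V := {v | ∀ w ∈ W, G.Adj v w}

/-- The flats of `G`: all sets of the form `St(W)`, `W ⊆ V`. -/
def flats {V : Type*} (G : SimpleGraph V) : Set (Set V) := {X | ∃ W : Set V, X = starW G W}

/-- Height of a family of sets: the largest `k` admitting a strictly decreasing chain
`X₀ ⊃ X₁ ⊃ … ⊃ X_k` inside the family. -/
noncomputable def heightOf {V : Type*} (F : Set (Set V)) : ℕ :=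
  sSup {k | ∃ c : Fin (k + 1) → Set V, StrictAnti c ∧ ∀ i, c i ∈ F}

/-- The c-rank of a graph: the height of its lattice of flats. -/
noncomputable def crk {V : Type*} (G : SimpleGraph V) : ℕ := heightOf (flats G)

/-- `J` has a witness in `A_G^c`: there is an equal-size row set such that the corresponding
submatrix of the complemented adjacency matrix can be put in lower unitriangular form
(1's on the diagonal, 0's above) by independently permuting rows and columns. -/
def hasWitness {V : Type*} (G : SimpleGraph V) (J : Finset V) : Prop :=
  ∃ i : Fin J.card → V, ∃ j : Fin J.card → V,
    Function.Injective i ∧ Function.Injective j ∧ (∀ r, j r ∈ J) ∧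
    (∀ r, ¬ G.Adj (i r) (j r)) ∧ (∀ r s, r < s → G.Adj (i r) (j s))

/-- The c-rank of `G` defined via witnesses: maximum size of a vertex subset with a witness. -/
noncomputable def crkW {V : Type*} (G : SimpleGraph V) : ℕ :=
  sSup {k | ∃ J : Finset V, J.card = k ∧ hasWitness G J}

/-- A strictly decreasing chain of flats of `G`. -/
def IsFlatChain {V : Type*} (G : SimpleGraph V) {k : ℕ} (c : Fin (k + 1) → Set V) : Prop :=
  StrictAnti c ∧ ∀ i, c i ∈ flats G

/-- `J` is a transversal of the partition of successive differences of the chain `c`: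
`J = {y₁, …, y_k}` with `y_i ∈ X_{i-1} \ X_i`. -/
def IsTransversal {V : Type*} {k : ℕ} (c : Fin (k + 1) → Set V) (J : Set V) : Prop :=
  ∃ y : Fin k → V, Set.range y = J ∧ ∀ i : Fin k, y i ∈ c i.castSucc \ c i.succ

/-- `c` is a maximal chain of flats: no flat can be inserted into it. -/
def IsMaximalFlatChain {V : Type*} (G : SimpleGraph V) {k : ℕ} (c : Fin (k + 1) → Set V) : Prop :=
  IsFlatChain G c ∧
    ∀ X ∈ flats G, IsChain (· ⊆ ·) (insert X (Set.range c)) → X ∈ Set.range c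

open Set Function

lemma IsChain.exists_strictAnti_range_eq {α : Type*} [PartialOrder α] {s : Set α}
    (hs : IsChain (· ≤ ·) s) (hfin : s.Finite) (hne : s.Nonempty) :
    ∃ (n : ℕ) (e : Fin (n + 1) → α), StrictAnti e ∧ range e = s := by
  classical
  let _ := hs.linearOrder
  let _ := hfin.fintype
  obtain ⟨n, hn⟩ : ∃ n, Fintype.card s = n + 1 :=
    Nat.exists_eq_succ_of_ne_zero (Fintype.card_pos_iff.mpr hne.to_subtype).ne'
  let f := Fintype.orderIsoFinOfCardEq s hn
  refine ⟨n, fun j => f j.rev, fun i j hij => f.strictMono (Fin.rev_lt_rev.mpr hij), ?_⟩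
  ext x
  refine ⟨?_, fun hx => ⟨(f.symm ⟨x, hx⟩).rev, by simp⟩⟩
  rintro ⟨j, rfl⟩
  exact (f j.rev).2

lemma exists_maximal_chain_superset {α : Type*} [PartialOrder α] {F : Set α} (hF : F.Finite)
    {k : ℕ} {c : Fin (k + 1) → α} (hc : StrictAnti c) (hcF : ∀ i, c i ∈ F) :
    ∃ (m : ℕ) (e : Fin (m + 1) → α), (StrictAnti e ∧ ∀ i, e i ∈ F) ∧
      (∀ X ∈ F, IsChain (· ≤ ·) (insert X (range e)) → X ∈ range e) ∧ range c ⊆ range e := by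
  let S : Set (Set α) := {M | IsChain (· ≤ ·) M ∧ M ⊆ F}
  have hS : S.Finite := hF.finite_subsets.subset fun M hM => hM.2
  have hcS : range c ∈ S := ⟨hc.antitone.isChain_range, range_subset_iff.mpr hcF⟩
  obtain ⟨M, hcM, ⟨hMchain, hMF⟩, hMmax⟩ := hS.exists_le_maximal hcS
  obtain ⟨m, e, he, rfl⟩ :=
    hMchain.exists_strictAnti_range_eq (hF.subset hMF) ((range_nonempty c).mono hcM)
  refine ⟨m, e, ⟨he, fun i => hMF (mem_range_self i)⟩, fun X hX hXe => ?_, hcM⟩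
  exact hMmax ⟨hXe, insert_subset hX hMF⟩ (subset_insert X _) (mem_insert X _)

def succDiff {V : Type*} {k : ℕ} (c : Fin (k + 1) → Set V) (i : Fin k) : Set V :=
  c i.castSucc \ c i.succ

section succDiff

variable {V : Type*} {k m : ℕ}

lemma succDiff_nonempty {c : Fin (k + 1) → Set V} (hc : StrictAnti c) (i : Fin k) :
    (succDiff c i).Nonempty :=
  sdiff_nonempty.mpr (hc i.castSucc_lt_succ).not_ge

lemma pairwise_disjoint_succDiff {c : Fin (k + 1) → Set V} (hc : Antitone c) :
    Pairwise (Disjoint on succDiff c) := by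
  have key : ∀ i j, i < j → Disjoint (succDiff c i) (succDiff c j) := fun i j hij =>
    disjoint_left.mpr fun x hxi hxj => hxi.2 (hc (Fin.succ_le_castSucc_iff.mpr hij) hxj.1)
  intro i j hij
  rcases hij.lt_or_gt with h | h
  exacts [key i j h, (key j i h).symm]

lemma exists_mem_succDiff {e : Fin (m + 1) → Set V} {x : V} (h0 : x ∈ e 0) {b : Fin (m + 1)}
    (hb : x ∉ e b) : ∃ t, x ∈ succDiff e t := by
  by_contra! h
  exact hb (Fin.induction h0 (fun t ht => not_not.mp fun hn => h t ⟨ht, hn⟩) b)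

lemma succDiff_subset_sdiff {e : Fin (m + 1) → Set V} (he : Antitone e) {t : Fin m}
    {a b : Fin (m + 1)} {x : V} (hxt : x ∈ succDiff e t) (hxab : x ∈ e a \ e b) :
    succDiff e t ⊆ e a \ e b := by
  have hat : a ≤ t.castSucc := by
    by_contra! h
    exact hxt.2 (he (Fin.castSucc_lt_iff_succ_le.mp h) hxab.1)
  have htb : t.succ ≤ b := by
    by_contra! h
    exact hxab.2 (he (Fin.le_castSucc_iff.mpr h) hxt.1)
  exact sdiff_subset_sdiff (he hat) (he htb)

lemma IsTransversal.exists_superset_of_range_subset {c : Fin (k + 1) → Set V}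
    {e : Fin (m + 1) → Set V} (hc : Antitone c) (he : StrictAnti e) (hce : range c ⊆ range e)
    {J : Set V} (hJ : IsTransversal c J) : ∃ T, IsTransversal e T ∧ J ⊆ T := by
  obtain ⟨y, rfl, hy⟩ := hJ
  have hends : ∀ i : Fin k, ∃ a b, c i.castSucc = e a ∧ c i.succ = e b := fun i =>
    let ⟨a, ha⟩ := hce (mem_range_self i.castSucc)
    let ⟨b, hb⟩ := hce (mem_range_self i.succ)
    ⟨a, b, ha.symm, hb.symm⟩
  choose a b ha hb using hends
  have hpiece : ∀ i, ∃ t, y i ∈ succDiff e t := fun i =>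
    exists_mem_succDiff (he.antitone (Fin.zero_le _) (ha i ▸ (hy i).1)) (hb i ▸ (hy i).2)
  choose σ hσ using hpiece
  have hσ_inj : Injective σ := by
    intro i j hij
    have hsub := succDiff_subset_sdiff he.antitone (hσ i) (ha i ▸ hb i ▸ hy i)
    rw [← ha, ← hb] at hsub
    by_contra hne
    exact (pairwise_disjoint_succDiff hc hne).ne_of_mem (hsub (hij ▸ hσ j)) (hy j) rfl
  let z := extend σ y fun t => (succDiff_nonempty he t).some
  refine ⟨range z, ⟨z, rfl, fun t => ?_⟩, ?_⟩
  · change z t ∈ succDiff e t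
    by_cases ht : ∃ i, σ i = t
    · obtain ⟨i, rfl⟩ := ht
      simpa only [z, hσ_inj.extend_apply] using hσ i
    · simpa only [z, extend_apply' _ _ _ ht] using (succDiff_nonempty he t).some_mem
  · rintro _ ⟨i, rfl⟩
    exact ⟨σ i, hσ_inj.extend_apply _ _ _⟩

lemma exists_strictMono_isTransversal_comp {c : Fin (k + 1) → Set V} (hc : Antitone c)
    {y : Fin k → V} (hy : ∀ i, y i ∈ succDiff c i) {J : Set V} (hJ : J ⊆ range y) :
    ∃ (m : ℕ) (ι : Fin (m + 1) → Fin (k + 1)), StrictMono ι ∧ IsTransversal (c ∘ ι) J := by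
  classical
  let I := Finset.univ.filter fun i => y i ∈ J
  let g := I.orderEmbOfFin rfl
  let ι : Fin (I.card + 1) → Fin (k + 1) := Fin.cons 0 (Fin.succ ∘ g)
  have hι_succ : ∀ t, ι t.succ = (g t).succ := fun t => rfl
  have hι_le : ∀ t u, t < u.succ → ι t ≤ (g u).castSucc := by
    intro t u htu
    induction t using Fin.cases with
    | zero => exact Fin.zero_le _
    | succ s =>
      rw [hι_succ, Fin.succ_le_castSucc_iff]
      exact g.strictMono (Fin.succ_lt_succ_iff.mp htu)
  have hι_castSucc : ∀ t, ι t.castSucc ≤ (g t).castSucc := fun t =>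
    hι_le _ t t.castSucc_lt_succ
  refine ⟨I.card, ι, Fin.strictMono_iff_lt_succ.mpr fun t => ?_, y ∘ g, ?_, fun t => ?_⟩
  · exact (hι_castSucc t).trans_lt (g t).castSucc_lt_succ
  · rw [range_comp, Finset.range_orderEmbOfFin, Finset.coe_filter]
    simp only [Finset.mem_univ, true_and]
    exact image_preimage_eq_of_subset hJ
  · exact ⟨hc (hι_castSucc t) (hy (g t)).1, (hy (g t)).2⟩

end succDiff

/-- For a finite graph `G` and `J ⊆ V`: `J` is a transversal of the partition of successive
differences for some chain of flats of `G` iff `J` is a partial transversal of the partition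
of successive differences for some maximal chain of flats of `G`. -/
theorem transversal_iff_partial_transversal_of_maximal_chain
    {V : Type*} [Fintype V] (G : SimpleGraph V) (J : Set V) :
    (∃ (k : ℕ) (c : Fin (k + 1) → Set V), IsFlatChain G c ∧ IsTransversal c J) ↔
    (∃ (k : ℕ) (c : Fin (k + 1) → Set V), IsMaximalFlatChain G c ∧
      ∃ T : Set V, IsTransversal c T ∧ J ⊆ T) := by
  constructor
  · rintro ⟨k, c, ⟨hc, hcF⟩, hJ⟩
    obtain ⟨m, e, he, hmax, hce⟩ := exists_maximal_chain_superset (toFinite (flats G)) hc hcF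
    exact ⟨m, e, ⟨he, hmax⟩, hJ.exists_superset_of_range_subset hc.antitone he.1 hce⟩
  · rintro ⟨k, c, ⟨⟨hc, hcF⟩, -⟩, T, ⟨y, rfl, hy⟩, hJT⟩
    obtain ⟨m, ι, hι, hJ⟩ := exists_strictMono_isTransversal_comp hc.antitone hy hJT
    exact ⟨m, c ∘ ι, ⟨hc.comp_strictMono hι, fun i => hcF (ι i)⟩, hJ⟩
end

section
/- Let G be a finite graph with vertex set {1,…,n}, let A be its adjacency matrix and A^c the matrix obtained by interchanging 0 and 1 in A. Then a subset J of vertices has a witness in A^c (i.e., there is a set of rows I with |I| = |J| such that A^c[I,J] can be put into lower unitriangular form, 1's on the diagonal and 0's above, by permuting rows and columns independently) if and only if the height of the semilattice generated under intersection by {St(j) : j ∈ J} equals |J|. -/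
def IsTriangular {ι α β : Type*} [LT ι] (R : α → β → Prop) (x : ι → α) (y : ι → β) : Prop :=
  (∀ r, ¬ R (x r) (y r)) ∧ ∀ r s, r < s → R (x r) (y s)

namespace IsTriangular

variable {ι α β : Type*} [LinearOrder ι] {R : α → β → Prop} {x : ι → α} {y : ι → β}

theorem injective_left (h : IsTriangular R x y) : Function.Injective x := by
  intro r s hrs
  by_contra hne
  rcases lt_or_gt_of_ne hne with hlt | hlt
  · exact h.1 s (hrs ▸ h.2 r s hlt)
  · exact h.1 r (hrs ▸ h.2 s r hlt)

theorem injective_right (h : IsTriangular R x y) : Function.Injective y := by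
  intro r s hrs
  by_contra hne
  rcases lt_or_gt_of_ne hne with hlt | hlt
  · exact h.1 r (hrs ▸ h.2 r s hlt)
  · exact h.1 s (hrs ▸ h.2 s r hlt)

end IsTriangular

theorem heightOf_eq_iff {V : Type*} {F : Set (Set V)} (hF : F.Nonempty) {n : ℕ}
    (hbound : ∀ k (c : Fin (k + 1) → Set V), StrictAnti c → (∀ i, c i ∈ F) → k ≤ n) :
    heightOf F = n ↔ ∃ c : Fin (n + 1) → Set V, StrictAnti c ∧ ∀ i, c i ∈ F := by
  have hbdd : BddAbove {k | ∃ c : Fin (k + 1) → Set V, StrictAnti c ∧ ∀ i, c i ∈ F} :=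
    ⟨n, fun k ⟨c, hc, hcF⟩ => hbound k c hc hcF⟩
  obtain ⟨X, hX⟩ := hF
  have hzero : 0 ∈ {k | ∃ c : Fin (k + 1) → Set V, StrictAnti c ∧ ∀ i, c i ∈ F} :=
    ⟨fun _ => X, Subsingleton.strictAnti (α := Fin 1) _, fun _ => hX⟩
  constructor
  · rintro rfl
    exact Nat.sSup_mem ⟨0, hzero⟩ hbdd
  · intro hn
    exact le_antisymm (csSup_le ⟨0, hzero⟩ fun k ⟨c, hc, hcF⟩ => hbound k c hc hcF)
      (le_csSup hbdd hn)

section starSemilattice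

variable {V : Type*} (G : SimpleGraph V) (J : Finset V)

/-- The semilattice `Ŝ_J`. -/
def starSemilattice : Set (Set V) := {X | ∃ W' : Set V, W' ⊆ (J : Set V) ∧ X = starW G W'}

theorem starW_anti {W W' : Set V} (h : W ⊆ W') : starW G W' ⊆ starW G W :=
  fun _ hv w hw => hv w (h hw)

theorem starSemilattice_nonempty : (starSemilattice G J).Nonempty :=
  ⟨starW G ∅, ∅, Set.empty_subset _, rfl⟩

variable {G J}

theorem exists_not_adj_of_notMem {X : Set V} (hX : X ∈ starSemilattice G J) {v : V}
    (hv : v ∉ X) : ∃ w ∈ J, ¬ G.Adj v w ∧ ∀ u ∈ X, G.Adj u w := by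
  obtain ⟨W', hW'J, rfl⟩ := hX
  simp only [starW, Set.mem_ofPred_eq, not_forall] at hv
  obtain ⟨w, hw, hvw⟩ := hv
  exact ⟨w, hW'J hw, hvw, fun u hu => hu w hw⟩

theorem card_le_of_isTriangular {k : ℕ} {x y : Fin k → V} (hyJ : ∀ r, y r ∈ J)
    (h : IsTriangular G.Adj x y) : k ≤ J.card := by
  simpa using Finset.card_le_card_of_injOn (s := Finset.univ) y (fun r _ => hyJ r)
    h.injective_right.injOn

theorem hasWitness_iff_exists_isTriangular :
    hasWitness G J ↔ ∃ x y : Fin J.card → V, (∀ r, y r ∈ J) ∧ IsTriangular G.Adj x y :=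
  ⟨fun ⟨x, y, _, _, hyJ, h⟩ => ⟨x, y, hyJ, h⟩,
    fun ⟨x, y, hyJ, h⟩ => ⟨x, y, h.injective_left, h.injective_right, hyJ, h⟩⟩

theorem exists_isTriangular_of_strictAnti {k : ℕ} {c : Fin (k + 1) → Set V} (hc : StrictAnti c)
    (hcJ : ∀ t, c t ∈ starSemilattice G J) :
    ∃ x y : Fin k → V, (∀ r, y r ∈ J) ∧ IsTriangular G.Adj x y := by
  have step (r : Fin k) : ∃ v ∈ c r.rev.castSucc,
      ∃ w ∈ J, ¬ G.Adj v w ∧ ∀ u ∈ c r.rev.succ, G.Adj u w := by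
    obtain ⟨v, hv, hv'⟩ := Set.exists_of_ssubset (Fin.strictAnti_iff_succ_lt.1 hc r.rev)
    exact ⟨v, hv, exists_not_adj_of_notMem (hcJ _) hv'⟩
  choose x hx y hyJ hdiag hy using step
  refine ⟨x, y, hyJ, hdiag, fun r s hrs => hy s (x r) ?_⟩
  exact hc.antitone (Fin.succ_le_castSucc_iff.2 (Fin.rev_lt_rev.2 hrs)) (hx r)

theorem exists_strictAnti_of_isTriangular {k : ℕ} {x y : Fin k → V} (hyJ : ∀ r, y r ∈ J)
    (h : IsTriangular G.Adj x y) :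
    ∃ c : Fin (k + 1) → Set V, StrictAnti c ∧ ∀ t, c t ∈ starSemilattice G J := by
  refine ⟨fun t => starW G (y '' {s | t.rev ≤ s.castSucc}), ?_,
    fun t => ⟨_, by rintro _ ⟨s, -, rfl⟩; exact hyJ s, rfl⟩⟩
  refine Fin.strictAnti_iff_succ_lt.2 fun t => lt_of_le_not_ge ?_ fun hsub => ?_
  · refine starW_anti G (Set.image_mono fun s hs => ?_)
    simp only [Set.mem_ofPred_eq, Fin.rev_succ, Fin.rev_castSucc] at hs ⊢
    exact Fin.castSucc_lt_succ.le.trans hs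
  · have hmem : x t.rev ∈ starW G (y '' {s | t.castSucc.rev ≤ s.castSucc}) := by
      rintro _ ⟨s, hs, rfl⟩
      simp only [Set.mem_ofPred_eq, Fin.rev_castSucc, Fin.succ_le_castSucc_iff] at hs
      exact h.2 _ _ hs
    exact h.1 t.rev (hsub hmem _ ⟨t.rev, by simp [Fin.rev_succ], rfl⟩)

end starSemilattice

theorem hasWitness_iff_height_eq_card_general
    {V : Type*} (G : SimpleGraph V) (J : Finset V) :
    hasWitness G J ↔
      heightOf {X | ∃ W' : Set V, W' ⊆ (J : Set V) ∧ X = starW G W'} = J.card := by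
  rw [hasWitness_iff_exists_isTriangular]
  change _ ↔ heightOf (starSemilattice G J) = J.card
  rw [heightOf_eq_iff (starSemilattice_nonempty G J) fun k c hc hcJ =>
    (exists_isTriangular_of_strictAnti hc hcJ).elim fun x ⟨y, hyJ, h⟩ =>
      card_le_of_isTriangular hyJ h]
  constructor
  · rintro ⟨x, y, hyJ, h⟩
    exact exists_strictAnti_of_isTriangular hyJ h
  · rintro ⟨c, hc, hcJ⟩
    exact exists_isTriangular_of_strictAnti hc hcJ

/-- For a finite graph `G` on vertex set `V` and `J ⊆ V`: `J` has a witness in the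
complemented adjacency matrix `A^c` iff the height of the `∩`-semilattice generated by
`{St(j) : j ∈ J}` equals `|J|`. -/
theorem hasWitness_iff_height_eq_card
    {V : Type*} [Fintype V] (G : SimpleGraph V) (J : Finset V) :
    hasWitness G J ↔
      heightOf {X | ∃ W' : Set V, W' ⊆ (J : Set V) ∧ X = starW G W'} = J.card :=
  hasWitness_iff_height_eq_card_general G J
end

section
/- For a finite simple graph G, two distinct vertices j_1, j_2 are c-independent (the corresponding columns of A^c are independent over the superboolean semiring) if and only if St(j_1) ≠ St(j_2). In particular, any two adjacent vertices are c-independent. -/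
lemma pair_witness {V : Type*} [DecidableEq V] (G : SimpleGraph V) {a b w : V}
    (hab : a ≠ b) (h1 : ¬ G.Adj w a) (h2 : G.Adj w b) : hasWitness G {a, b} := by
  have hc : ({a, b} : Finset V).card = 2 := Finset.card_pair hab
  have hwb : w ≠ b := G.ne_of_adj h2
  refine ⟨fun r => ![w, b] (finCongr hc r), fun r => ![a, b] (finCongr hc r), ?_, ?_, ?_, ?_, ?_⟩
  · have key : Function.Injective ![w, b] := by
      intro x y h; fin_cases x <;> fin_cases y <;> simp_all
    exact key.comp (finCongr hc).injective
  · have key : Function.Injective ![a, b] := by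
      intro x y h; fin_cases x <;> fin_cases y <;> simp_all
    exact key.comp (finCongr hc).injective
  · intro r
    have : ∀ x : Fin 2, ![a, b] x ∈ ({a, b} : Finset V) := by
      intro x; fin_cases x <;> simp
    exact this _
  · intro r
    have : ∀ x : Fin 2, ¬ G.Adj (![w, b] x) (![a, b] x) := by
      intro x; fin_cases x <;> simp [h1]
    exact this _
  · intro r s hrs
    have hxy : (finCongr hc r) < (finCongr hc s) := hrs
    have : ∀ x y : Fin 2, x < y → G.Adj (![w, b] x) (![a, b] y) := by
      intro x y h; fin_cases x <;> fin_cases y <;> simp_all [h2]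
    exact this _ _ hxy

/-- Two distinct vertices `j₁, j₂` of a finite graph are c-independent (the corresponding
columns of `A^c` are independent, i.e. `{j₁, j₂}` has a witness) iff `St(j₁) ≠ St(j₂)`.
In particular, any two adjacent vertices are c-independent. -/
theorem pair_cIndependent_iff_star_ne
    {V : Type*} [Fintype V] [DecidableEq V] (G : SimpleGraph V) :
    (∀ j₁ j₂ : V, j₁ ≠ j₂ →
        (hasWitness G {j₁, j₂} ↔ G.neighborSet j₁ ≠ G.neighborSet j₂)) ∧
    (∀ j₁ j₂ : V, G.Adj j₁ j₂ → hasWitness G {j₁, j₂}) := by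
  have main : ∀ j₁ j₂ : V, j₁ ≠ j₂ →
      (hasWitness G {j₁, j₂} ↔ G.neighborSet j₁ ≠ G.neighborSet j₂) := by
    intro j₁ j₂ hne
    constructor
    · rintro ⟨i, j, hi, hj, hmem, hdiag, hlt⟩ heq
      have hc : ({j₁, j₂} : Finset V).card = 2 := Finset.card_pair hne
      have h01 : (⟨0, by omega⟩ : Fin ({j₁, j₂} : Finset V).card) < ⟨1, by omega⟩ := by
        simp [Fin.lt_def]
      set r0 : Fin ({j₁, j₂} : Finset V).card := ⟨0, by omega⟩
      set r1 : Fin ({j₁, j₂} : Finset V).card := ⟨1, by omega⟩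
      have hN : G.neighborSet (j r0) = G.neighborSet (j r1) := by
        have m0 := hmem r0
        have m1 := hmem r1
        simp only [Finset.mem_insert, Finset.mem_singleton] at m0 m1
        rcases m0 with h0 | h0 <;> rcases m1 with h1 | h1 <;>
          simp [h0, h1, heq]
      have hadj : G.Adj (i r0) (j r1) := hlt r0 r1 h01
      have : i r0 ∈ G.neighborSet (j r0) := by
        rw [hN]; exact (G.adj_comm _ _).mp hadj
      exact hdiag r0 ((G.adj_comm _ _).mp this)
    · intro hne'
      have : ∃ w, ¬ (w ∈ G.neighborSet j₁ ↔ w ∈ G.neighborSet j₂) := by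
        by_contra h
        push_neg at h
        exact hne' (Set.ext h)
      obtain ⟨w, hw⟩ := this
      simp only [SimpleGraph.mem_neighborSet] at hw
      rcases Classical.em (G.Adj j₁ w) with h1 | h1
      · have h2 : ¬ G.Adj j₂ w := fun h2 => hw ⟨fun _ => h2, fun _ => h1⟩
        rw [Finset.pair_comm]
        exact pair_witness G hne.symm (fun h => h2 ((G.adj_comm _ _).mp h))
          ((G.adj_comm _ _).mp h1)
      · have h2 : G.Adj j₂ w := by
          by_contra h2
          exact hw ⟨fun h => absurd h h1, fun h => absurd h h2⟩
        exact pair_witness G hne (fun h => h1 ((G.adj_comm _ _).mp h))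
          ((G.adj_comm _ _).mp h2)
  refine ⟨main, fun j₁ j₂ hadj => ?_⟩
  refine (main j₁ j₂ hadj.ne).mpr ?_
  intro heq
  have : j₁ ∈ G.neighborSet j₁ := by rw [heq]; exact (G.adj_comm _ _).mp hadj
  simp at this
end

section
/- For every finite simple graph G, the c-rank of G is at most maxdeg(G) + 1, where maxdeg(G) is the maximum vertex degree. -/
/-- For every finite simple graph `G`, the c-rank of `G` is at most `maxdeg G + 1`. -/
theorem crk_le_maxDegree_succ {V : Type*} [Fintype V] (G : SimpleGraph V)
    [DecidableRel G.Adj] :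
    crk G ≤ G.maxDegree + 1 := by
  classical
  apply csSup_le'
  rintro k ⟨c, hsa, hmem⟩
  rcases Nat.eq_zero_or_pos k with rfl | hk
  · omega
  -- c 1 is a proper flat
  obtain ⟨W, hW⟩ := hmem ⟨1, by omega⟩
  have h01 : (⟨0, by omega⟩ : Fin (k+1)) < ⟨1, by omega⟩ := by
    simp [Fin.lt_def]
  have hss : c ⟨1, by omega⟩ ⊂ c ⟨0, by omega⟩ := hsa h01
  have hWne : W.Nonempty := by
    by_contra h
    rw [Set.not_nonempty_iff_eq_empty] at h
    subst h
    have : starW G (∅ : Set V) = Set.univ := by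
      ext v; simp [starW]
    rw [this] at hW
    rw [hW] at hss
    exact hss.not_subset (Set.subset_univ _)
  obtain ⟨w, hw⟩ := hWne
  have hsub : c ⟨1, by omega⟩ ⊆ G.neighborSet w := by
    intro v hv
    rw [hW] at hv
    exact (hv w hw).symm
  -- bound on the size of the neighbor set
  have hdeg : (G.neighborSet w).ncard ≤ G.maxDegree := by
    have : (G.neighborSet w).ncard = G.degree w := by
      rw [← SimpleGraph.card_neighborSet_eq_degree, Set.ncard_eq_toFinset_card', Set.toFinset_card]
    rw [this]
    exact G.degree_le_maxDegree w
  -- injective map Fin k → Fin (maxDegree + 1)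
  set d := G.maxDegree with hd
  have hle : ∀ i : Fin k, (c i.succ).ncard ≤ d := by
    intro i
    have h1i : (⟨1, by omega⟩ : Fin (k+1)) ≤ i.succ := by
      simp [Fin.le_def]
    have : c i.succ ⊆ c ⟨1, by omega⟩ := hsa.antitone h1i
    exact le_trans (Set.ncard_le_ncard (this.trans hsub) (Set.toFinite _)) hdeg
  have hinj : Function.Injective (fun i : Fin k => (⟨(c i.succ).ncard, Nat.lt_succ_of_le (hle i)⟩ : Fin (d+1))) := by
    intro a b hab
    simp only [Fin.mk.injEq] at hab
    by_contra hne
    rcases lt_or_gt_of_ne hne with h | h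
    · have := Set.ncard_lt_ncard (hsa (Fin.succ_lt_succ_iff.mpr h)) (Set.toFinite _)
      omega
    · have := Set.ncard_lt_ncard (hsa (Fin.succ_lt_succ_iff.mpr h)) (Set.toFinite _)
      omega
  have := Fintype.card_le_of_injective _ hinj
  simpa using this
end

section
/- If G' is a restriction (induced subgraph) of a finite simple graph G, then c-rk(G') ≤ c-rk(G). Moreover, if G' is a complete subgraph of G on vertex set V', then c-rk(G) ≥ |V'|. -/
lemma hasWitness_empty {V : Type*} (G : SimpleGraph V) : hasWitness G ∅ := by
  simp only [hasWitness, Finset.card_empty]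
  exact ⟨Fin.elim0, Fin.elim0, fun r => r.elim0, fun r => r.elim0, fun r => r.elim0,
    fun r => r.elim0, fun r => r.elim0⟩

lemma crkW_bdd {V : Type*} [Fintype V] (G : SimpleGraph V) :
    BddAbove {k | ∃ J : Finset V, J.card = k ∧ hasWitness G J} := by
  refine ⟨Fintype.card V, fun k hk => ?_⟩
  obtain ⟨J, hJ, -⟩ := hk
  exact hJ ▸ J.card_le_univ

lemma le_crkW {V : Type*} [Fintype V] (G : SimpleGraph V) {J : Finset V}
    (h : hasWitness G J) : J.card ≤ crkW G :=
  le_csSup (crkW_bdd G) ⟨J, rfl, h⟩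

/-- If `G'` is a restriction (induced subgraph) of a finite simple graph `G`, then
`c-rk G' ≤ c-rk G`; and if `G'` is a complete subgraph of `G` on vertex set `V'`,
then `c-rk G ≥ |V'|`. -/
theorem crkW_induce_le_and_complete_subgraph
    {V : Type*} [Fintype V] [DecidableEq V] (G : SimpleGraph V) :
    (∀ s : Set V, crkW (G.induce s) ≤ crkW G) ∧
    (∀ s : Finset V, (∀ v ∈ s, ∀ w ∈ s, v ≠ w → G.Adj v w) → s.card ≤ crkW G) := by
  constructor
  · intro s
    unfold crkW
    refine csSup_le ?_ ?_
    · exact ⟨0, ∅, Finset.card_empty, hasWitness_empty _⟩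
    rintro k ⟨J, hJ, i, j, hi, hj, hjJ, hdiag, hlt⟩
    have hcard : (J.image (Subtype.val)).card = J.card :=
      Finset.card_image_of_injective J Subtype.val_injective
    refine le_csSup (crkW_bdd G) ⟨J.image Subtype.val, hcard.trans hJ, ?_⟩
    have hc : Function.Injective (Fin.cast hcard) := Fin.cast_injective hcard
    unfold hasWitness
    refine ⟨fun r => (i (Fin.cast hcard r) : V), fun r => (j (Fin.cast hcard r) : V),
      Subtype.val_injective.comp (hi.comp hc), Subtype.val_injective.comp (hj.comp hc),
      fun r => Finset.mem_image_of_mem _ (hjJ _), fun r => hdiag _,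
      fun r t h => hlt _ _ h⟩
  · intro s hs
    have e := s.equivFin.symm
    refine le_crkW G (J := s) ?_
    refine ⟨fun r => (e r : V), fun r => (e r : V),
      Subtype.val_injective.comp e.injective, Subtype.val_injective.comp e.injective,
      fun r => (e r).2, fun r => G.irrefl, fun r t h => ?_⟩
    exact hs _ (e r).2 _ (e t).2 (fun heq => absurd (e.injective (Subtype.val_injective heq)) h.ne)
end

section
/- Every finite connected simple graph G admits a retraction onto a sober connected induced subgraph G' such that the lattices of flats of G and G' are isomorphic. -/
/-- A graph is sober if the star map `v ↦ St(v)` is injective. -/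
def Sober {V : Type*} (G : SimpleGraph V) : Prop :=
  Function.Injective fun v => G.neighborSet v

section Aux

variable {V : Type*} (G : SimpleGraph V)

/-- Setoid identifying vertices with the same neighborhood. -/
def nbSetoid : Setoid V :=
  ⟨fun v w => G.neighborSet v = G.neighborSet w,
   ⟨fun _ => rfl, Eq.symm, Eq.trans⟩⟩

/-- A canonical representative of the neighborhood class of a vertex. -/
noncomputable def repr' (v : V) : V :=
  (Quotient.mk (nbSetoid G) v).out

lemma nb_repr (v : V) : G.neighborSet (repr' G v) = G.neighborSet v :=
  Quotient.exact ((Quotient.mk (nbSetoid G) v).out_eq)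

lemma repr_eq_of_nb {v w : V} (h : G.neighborSet v = G.neighborSet w) :
    repr' G v = repr' G w := by
  unfold repr'
  congr 1
  exact Quotient.sound h

lemma repr_idem (v : V) : repr' G (repr' G v) = repr' G v :=
  repr_eq_of_nb G (nb_repr G v)

lemma adj_repr_left (v w : V) : G.Adj (repr' G v) w ↔ G.Adj v w := by
  have : w ∈ G.neighborSet (repr' G v) ↔ w ∈ G.neighborSet v := by rw [nb_repr]
  simpa [SimpleGraph.mem_neighborSet] using this

lemma adj_repr_right (v w : V) : G.Adj v (repr' G w) ↔ G.Adj v w := by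
  rw [SimpleGraph.adj_comm, adj_repr_left, SimpleGraph.adj_comm]

lemma flat_closed {X : Set V} (hX : X ∈ flats G) (v : V) :
    v ∈ X ↔ repr' G v ∈ X := by
  obtain ⟨W, rfl⟩ := hX
  constructor
  · intro h w hw; exact (adj_repr_left G v w).2 (h w hw)
  · intro h w hw; exact (adj_repr_left G v w).1 (h w hw)

end Aux

/-- Every finite connected simple graph `G` admits a retraction onto a sober connected
induced subgraph `G'` whose lattice of flats is isomorphic to that of `G`. -/
theorem exists_sober_retract {V : Type*} [Fintype V] (G : SimpleGraph V)
    (hG : G.Connected) :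
    ∃ (s : Set V) (φ : V → V),
      (∀ v, φ v ∈ s) ∧ (∀ v ∈ s, φ v = v) ∧
      (∀ v w, G.Adj v w → G.Adj (φ v) (φ w)) ∧
      Sober (G.induce s) ∧ (G.induce s).Connected ∧
      Nonempty ((flats G) ≃o (flats (G.induce s))) := by
  classical
  set s : Set V := Set.range (repr' G) with hs
  have hmem : ∀ v, repr' G v ∈ s := fun v => ⟨v, rfl⟩
  have hfix : ∀ v ∈ s, repr' G v = v := by
    rintro v ⟨u, rfl⟩; exact repr_idem G u
  have hadj : ∀ v w, G.Adj v w → G.Adj (repr' G v) (repr' G w) := by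
    intro v w h
    exact (adj_repr_left G _ _).2 ((adj_repr_right G _ _).2 h)
  refine ⟨s, repr' G, hmem, hfix, hadj, ?_, ?_, ?_⟩
  · -- Sober
    intro a b hab
    have key : G.neighborSet (a : V) = G.neighborSet (b : V) := by
      ext u
      have h1 : ∀ c : s, (u ∈ G.neighborSet (c : V) ↔
          (⟨repr' G u, hmem u⟩ : s) ∈ (G.induce s).neighborSet c) := by
        intro c
        rw [SimpleGraph.mem_neighborSet, SimpleGraph.mem_neighborSet]
        show G.Adj (c : V) u ↔ G.Adj (c : V) (repr' G u)
        exact (adj_repr_right G _ _).symm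
      rw [h1 a, h1 b]
      simp only at hab
      rw [hab]
    apply Subtype.ext
    calc (a : V) = repr' G a := (hfix _ a.2).symm
      _ = repr' G b := repr_eq_of_nb G key
      _ = (b : V) := hfix _ b.2
  · -- Connected
    have hwalk : ∀ v w : V, G.Walk v w →
        (G.induce s).Reachable ⟨repr' G v, hmem v⟩ ⟨repr' G w, hmem w⟩ := by
      intro v w p
      induction p with
      | nil => exact SimpleGraph.Reachable.refl _
      | @cons a b c h p ih =>
        refine (SimpleGraph.Adj.reachable ?_).trans ih
        show G.Adj (repr' G a) (repr' G b)
        exact hadj _ _ h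
    rw [SimpleGraph.connected_iff]
    constructor
    · intro a b
      obtain ⟨p⟩ := hG.preconnected (a : V) (b : V)
      have h := hwalk _ _ p
      have ea : (⟨repr' G (a : V), hmem _⟩ : s) = a := Subtype.ext (hfix _ a.2)
      have eb : (⟨repr' G (b : V), hmem _⟩ : s) = b := Subtype.ext (hfix _ b.2)
      rwa [ea, eb] at h
    · obtain ⟨v⟩ := hG.nonempty
      exact ⟨⟨repr' G v, hmem v⟩⟩
  · -- Flats iso
    have hfwd : ∀ X ∈ flats G,
        (Subtype.val ⁻¹' X : Set s) ∈ flats (G.induce s) := by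
      rintro X ⟨W, rfl⟩
      refine ⟨Subtype.val ⁻¹' (repr' G '' W), ?_⟩
      ext v
      constructor
      · intro h w hw
        obtain ⟨u, hu, huw⟩ := hw
        show G.Adj (v : V) (w : V)
        rw [← huw, adj_repr_right]
        exact h u hu
      · intro h w hw
        have := h ⟨repr' G w, hmem w⟩ ⟨w, hw, rfl⟩
        exact (adj_repr_right G _ _).1 this
    have hbwd : ∀ Y ∈ flats (G.induce s),
        {v : V | repr' G v ∈ Subtype.val '' Y} ∈ flats G := by
      rintro Y ⟨W', rfl⟩
      refine ⟨Subtype.val '' W', ?_⟩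
      ext v
      simp only [Set.mem_setOf_eq, Set.mem_image]
      constructor
      · rintro ⟨y, hy, hyv⟩ w ⟨w', hw', hww⟩
        have := hy w' hw'
        have h2 : G.Adj (y : V) (w' : V) := this
        rw [hyv] at h2
        rw [← hww]
        exact (adj_repr_left G _ _).1 h2
      · intro h
        refine ⟨⟨repr' G v, hmem v⟩, ?_, rfl⟩
        intro w hw
        show G.Adj (repr' G v) (w : V)
        rw [adj_repr_left]
        exact h (w : V) ⟨w, hw, rfl⟩
    refine ⟨{
      toFun := fun X => ⟨Subtype.val ⁻¹' (X : Set V), hfwd _ X.2⟩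
      invFun := fun Y => ⟨{v : V | repr' G v ∈ Subtype.val '' (Y : Set s)}, hbwd _ Y.2⟩
      left_inv := ?_
      right_inv := ?_
      map_rel_iff' := ?_ }⟩
    · rintro ⟨X, hX⟩
      apply Subtype.ext
      ext v
      simp only [Set.mem_setOf_eq, Set.image_preimage_eq_inter_range,
        Subtype.range_coe, Set.mem_inter_iff]
      exact ⟨fun h => (flat_closed G hX v).2 h.1,
        fun h => ⟨(flat_closed G hX v).1 h, hmem v⟩⟩
    · rintro ⟨Y, hY⟩
      apply Subtype.ext
      ext v
      simp only [Set.mem_preimage, Set.mem_setOf_eq]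
      rw [hfix _ v.2]
      have : (v : V) = Subtype.val v := rfl
      rw [this, Subtype.val_injective.mem_set_image]
    · rintro ⟨X, hX⟩ ⟨X', hX'⟩
      simp only [Equiv.coe_fn_mk, Subtype.mk_le_mk]
      constructor
      · intro h v hv
        have h1 : repr' G v ∈ X := (flat_closed G hX v).1 hv
        have h2 : (⟨repr' G v, hmem v⟩ : s) ∈ (Subtype.val ⁻¹' X : Set s) := h1
        have h3 := h h2
        exact (flat_closed G hX' v).2 h3
      · intro h v hv
        exact h hv
end

section
/- A finite tree T is sober if and only if no two leaves of T are at distance 2 from each other. -/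
/-- In a tree, two distinct vertices have at most one common neighbor. -/
lemma tree_common_neighbor_unique {V : Type*} {T : SimpleGraph V} (hT : T.IsTree)
    {v w u₁ u₂ : V} (hvw : v ≠ w)
    (h1 : T.Adj v u₁) (h2 : T.Adj v u₂) (h3 : T.Adj u₁ w) (h4 : T.Adj u₂ w) :
    u₁ = u₂ := by
  by_contra hne
  have hp1 : (SimpleGraph.Walk.cons h1 (SimpleGraph.Walk.cons h3 SimpleGraph.Walk.nil)).IsPath := by
    simp [SimpleGraph.Walk.isPath_def, h1.ne, h3.ne, hvw]
  have hp2 : (SimpleGraph.Walk.cons h2 (SimpleGraph.Walk.cons h4 SimpleGraph.Walk.nil)).IsPath := by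
    simp [SimpleGraph.Walk.isPath_def, h2.ne, h4.ne, hvw]
  obtain ⟨p, _, hu⟩ := hT.existsUnique_path v w
  have heq := (hu _ hp1).trans (hu _ hp2).symm
  have := congrArg SimpleGraph.Walk.support heq
  simp at this
  exact hne this

/-- A finite tree is sober iff no two leaves (vertices of degree 1) are at distance 2
from each other. -/
theorem tree_sober_iff_no_leaves_at_distance_two
    {V : Type*} [Fintype V] (T : SimpleGraph V) [DecidableRel T.Adj]
    (hT : T.IsTree) :
    Sober T ↔ ∀ v w : V, T.degree v = 1 → T.degree w = 1 → T.dist v w ≠ 2 := by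
  constructor
  · intro hs v w hv hw hd
    have hvw : v ≠ w := by
      intro h; subst h; rw [SimpleGraph.dist_self] at hd; omega
    obtain ⟨p, hp⟩ := SimpleGraph.exists_walk_of_dist_ne_zero (by omega : T.dist v w ≠ 0)
    rw [hd] at hp
    cases p with
    | nil => simp at hp
    | cons h q =>
      cases q with
      | nil => simp at hp
      | cons h' q' =>
        cases q' with
        | cons h'' q'' => simp at hp
        | nil =>
          rename_i x
          have hNv : T.neighborFinset v = {x} :=
            Finset.eq_singleton_iff_unique_mem.mpr ⟨by simpa using h,
              fun y hy => by
                obtain ⟨a, ha⟩ := Finset.card_eq_one.mp hv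
                have hx : x ∈ T.neighborFinset v := by simpa using h
                rw [ha, Finset.mem_singleton] at hy hx
                rw [hy, hx]⟩
          have hNw : T.neighborFinset w = {x} :=
            Finset.eq_singleton_iff_unique_mem.mpr ⟨by simpa using h'.symm,
              fun y hy => by
                obtain ⟨a, ha⟩ := Finset.card_eq_one.mp hw
                have hx : x ∈ T.neighborFinset w := by simpa using h'.symm
                rw [ha, Finset.mem_singleton] at hy hx
                rw [hy, hx]⟩
          apply hvw
          apply hs
          show T.neighborSet v = T.neighborSet w
          rw [← Set.coe_toFinset (T.neighborSet v), ← Set.coe_toFinset (T.neighborSet w)]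
          rw [show (T.neighborSet v).toFinset = T.neighborFinset v from rfl,
            show (T.neighborSet w).toFinset = T.neighborFinset w from rfl, hNv, hNw]
  · intro h v w hvw
    by_contra hne
    have hN : T.neighborSet v = T.neighborSet w := hvw
    have hmem : ∀ y, T.Adj v y ↔ T.Adj w y := by
      intro y
      constructor
      · intro hy
        have : y ∈ T.neighborSet w := hN ▸ hy
        exact this
      · intro hy
        have : y ∈ T.neighborSet v := hN.symm ▸ hy
        exact this
    have hr : T.Reachable v w := hT.isConnected.preconnected v w
    obtain ⟨p⟩ := hr
    have hadjvw : ¬ T.Adj v w := by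
      intro hvw'
      exact T.irrefl ((hmem w).mp hvw')
    cases p with
    | nil => exact hne rfl
    | cons hu q =>
      rename_i u
      have huv : T.Adj v u := hu
      have huw : T.Adj u w := ((hmem u).mp huv).symm
      have hNv : T.neighborFinset v = {u} :=
        Finset.eq_singleton_iff_unique_mem.mpr ⟨by simpa using huv,
          fun y hy => by
            have hyv : T.Adj v y := by simpa using hy
            exact (tree_common_neighbor_unique hT hne hyv huv
              ((hmem y).mp hyv).symm huw).symm ▸ rfl⟩
      have hNw : T.neighborFinset w = {u} :=
        Finset.eq_singleton_iff_unique_mem.mpr ⟨by simpa using huw.symm,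
          fun y hy => by
            have hyw : T.Adj w y := by simpa using hy
            exact (tree_common_neighbor_unique hT hne ((hmem y).mpr hyw) huv
              hyw.symm huw).symm ▸ rfl⟩
      have hdv : T.degree v = 1 := by simp [SimpleGraph.degree, hNv]
      have hdw : T.degree w = 1 := by simp [SimpleGraph.degree, hNw]
      have hle : T.dist v w ≤ 2 := by
        simpa using SimpleGraph.dist_le (SimpleGraph.Walk.cons huv
          (SimpleGraph.Walk.cons huw SimpleGraph.Walk.nil))
      have h0 : T.dist v w ≠ 0 := SimpleGraph.dist_ne_zero_iff_ne_and_reachable.mpr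
        ⟨hne, hT.isConnected.preconnected v w⟩
      have h1 : T.dist v w ≠ 1 := fun hh => hadjvw (SimpleGraph.dist_eq_one_iff_adj.mp hh)
      exact h v w hdv hdw (by omega)
end

section
/- Let G = (V,E) be a finite sober connected simple graph with c-rk(G) = 3. Define Mat(G) to consist of all subsets of V of size at most 2, together with all 3-subsets W of V such that W ⊄ St(v) for every v ∈ V. Then Mat(G) is a matroid (i.e., it is a hereditary collection satisfying the exchange property). -/
/-- `Mat G`: all subsets of `V` of size at most 2, together with all 3-subsets `W` such
that `W` is contained in no star `St(v)`. -/
def MatG {V : Type*} (G : SimpleGraph V) : Set (Finset V) :=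
  {W | W.card ≤ 2 ∨ (W.card = 3 ∧ ∀ v : V, ¬ (↑W ⊆ G.neighborSet v))}

/-- The set of chain lengths in a family of subsets of a finite type is bounded above. -/
lemma chainSet_bddAbove {V : Type*} [Fintype V] (F : Set (Set V)) :
    BddAbove {k | ∃ c : Fin (k + 1) → Set V, StrictAnti c ∧ ∀ i, c i ∈ F} := by
  refine ⟨Fintype.card V, fun k hk => ?_⟩
  obtain ⟨c, hc, -⟩ := hk
  -- cardinalities strictly decrease along the chain
  have key : ∀ n, ∀ hn : n < k + 1, n + (c ⟨n, hn⟩).ncard ≤ (c ⟨0, Nat.succ_pos k⟩).ncard := by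
    intro n
    induction n with
    | zero => intro hn; simp
    | succ m ih =>
      intro hn
      have hm : m < k + 1 := Nat.lt_of_succ_lt hn
      have hlt : c ⟨m + 1, hn⟩ < c ⟨m, hm⟩ := hc (by simp [Fin.lt_def])
      have hcard : (c ⟨m + 1, hn⟩).ncard < (c ⟨m, hm⟩).ncard :=
        Set.ncard_lt_ncard hlt (Set.toFinite _)
      have := ih hm
      omega
  have h1 := key k (Nat.lt_succ_self k)
  have h2 : (c ⟨0, Nat.succ_pos k⟩).ncard ≤ Fintype.card V := by
    have := Set.ncard_le_ncard (Set.subset_univ (c ⟨0, Nat.succ_pos k⟩)) (Set.toFinite _)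
    rwa [Set.ncard_univ, Nat.card_eq_fintype_card] at this
  omega

lemma no_four_chain {V : Type*} [Fintype V] (G : SimpleGraph V) (hrk : crk G = 3)
    (c : Fin 5 → Set V) (hc : StrictAnti c) (hf : ∀ i, c i ∈ flats G) : False := by
  have h4 : 4 ∈ {k | ∃ c : Fin (k + 1) → Set V, StrictAnti c ∧ ∀ i, c i ∈ flats G} :=
    ⟨c, hc, hf⟩
  have hle : (4 : ℕ) ≤ crk G := le_csSup (chainSet_bddAbove (flats G)) h4
  omega

/-- The key structural lemma: in a graph with no chain of five flats, whenever
`{a, b, t}` lies in a common star, either every neighbour of `a` is a neighbour of `b`,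
or every common neighbour of `a` and `b` is a neighbour of `t`. -/
lemma key_lemma {V : Type*} [Fintype V] (G : SimpleGraph V) (hrk : crk G = 3) (a b t v : V)
    (hva : G.Adj v a) (hvb : G.Adj v b) (hvt : G.Adj v t) :
    (∀ w, G.Adj w a → G.Adj w b) ∨ (∀ w, G.Adj w a → G.Adj w b → G.Adj w t) := by
  by_contra hcon
  push_neg at hcon
  obtain ⟨⟨w₁, hw₁a, hw₁b⟩, w₂, hw₂a, hw₂b, hw₂t⟩ := hcon
  refine no_four_chain G hrk
    ![Set.univ, {w | G.Adj w a}, {w | G.Adj w a ∧ G.Adj w b},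
      {w | G.Adj w a ∧ G.Adj w b ∧ G.Adj w t}, ∅] ?_ ?_
  · rw [Fin.strictAnti_iff_succ_lt]
    intro i
    fin_cases i
    · show ({w | G.Adj w a} : Set V) < Set.univ
      rw [Set.lt_iff_ssubset, Set.ssubset_iff_subset_ne]
      refine ⟨Set.subset_univ _, fun h => ?_⟩
      have ha : a ∈ ({w | G.Adj w a} : Set V) := by rw [h]; exact Set.mem_univ a
      exact G.irrefl ha
    · show ({w | G.Adj w a ∧ G.Adj w b} : Set V) < {w | G.Adj w a}
      rw [Set.lt_iff_ssubset, ssubset_iff_subset_not_subset]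
      constructor
      · intro w hw; exact hw.1
      · intro h; exact hw₁b (h hw₁a).2
    · show ({w | G.Adj w a ∧ G.Adj w b ∧ G.Adj w t} : Set V) < {w | G.Adj w a ∧ G.Adj w b}
      rw [Set.lt_iff_ssubset, ssubset_iff_subset_not_subset]
      constructor
      · intro w hw; exact ⟨hw.1, hw.2.1⟩
      · intro h; exact hw₂t (h ⟨hw₂a, hw₂b⟩).2.2
    · show (∅ : Set V) < {w | G.Adj w a ∧ G.Adj w b ∧ G.Adj w t}
      rw [Set.lt_iff_ssubset]
      exact Set.empty_ssubset.mpr ⟨v, hva, hvb, hvt⟩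
  · intro i
    fin_cases i
    · refine ⟨∅, ?_⟩
      show (Set.univ : Set V) = starW G ∅
      ext w; simp [starW]
    · refine ⟨{a}, ?_⟩
      show ({w | G.Adj w a} : Set V) = starW G {a}
      ext w; simp [starW]
    · refine ⟨{a, b}, ?_⟩
      show ({w | G.Adj w a ∧ G.Adj w b} : Set V) = starW G {a, b}
      ext w; simp [starW]
    · refine ⟨{a, b, t}, ?_⟩
      show ({w | G.Adj w a ∧ G.Adj w b ∧ G.Adj w t} : Set V) = starW G {a, b, t}
      ext w; simp [starW]
    · refine ⟨Set.univ, ?_⟩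
      show (∅ : Set V) = starW G Set.univ
      ext w
      simp only [starW, Set.mem_empty_iff_false, Set.mem_setOf_eq, false_iff, not_forall]
      exact ⟨w, Set.mem_univ w, G.irrefl⟩

/-- For a finite sober connected graph of c-rank 3, `Mat G` is a matroid: a nonempty
hereditary collection satisfying the exchange property. -/
theorem matG_isMatroid {V : Type*} [Fintype V] [DecidableEq V] (G : SimpleGraph V)
    (hsober : Sober G) (hconn : G.Connected) (hrk : crk G = 3) :
    (∅ ∈ MatG G) ∧
    (∀ I J : Finset V, I ⊆ J → J ∈ MatG G → I ∈ MatG G) ∧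
    (∀ I J : Finset V, I ∈ MatG G → J ∈ MatG G → I.card = J.card + 1 →
      ∃ i ∈ I, i ∉ J ∧ insert i J ∈ MatG G) := by
  refine ⟨Or.inl (by simp), ?_, ?_⟩
  · -- hereditary
    intro I J hIJ hJ
    rcases hJ with h | ⟨h3, hst⟩
    · exact Or.inl (le_trans (Finset.card_le_card hIJ) h)
    · rcases le_or_gt I.card 2 with h | h
      · exact Or.inl h
      · have hIc : I.card ≤ J.card := Finset.card_le_card hIJ
        have : I = J := Finset.eq_of_subset_of_card_le hIJ (by omega)
        subst this
        exact Or.inr ⟨by omega, hst⟩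
  · -- exchange
    intro I J hI hJ hcard
    have hIle : I.card ≤ 3 := by rcases hI with h | ⟨h, -⟩ <;> omega
    have hJle : J.card ≤ 2 := by omega
    have hne : (I \ J).Nonempty := by
      rw [Finset.sdiff_nonempty]
      intro hsub
      have := Finset.card_le_card hsub
      omega
    rcases lt_or_eq_of_le hJle with hJ1 | hJ2
    · -- J.card ≤ 1, so I.card ≤ 2 and any insertion has card ≤ 2
      obtain ⟨i, hi⟩ := hne
      rw [Finset.mem_sdiff] at hi
      refine ⟨i, hi.1, hi.2, Or.inl ?_⟩
      have := Finset.card_insert_le i J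
      omega
    · -- J.card = 2, I.card = 3
    -- I is a 3-set contained in no star
      have hI3 : I.card = 3 := by omega
      have hIst : ∀ v : V, ¬ (↑I ⊆ G.neighborSet v) := by
        rcases hI with h | ⟨-, h⟩
        · omega
        · exact h
      obtain ⟨a, b, hab, hJab⟩ := Finset.card_eq_two.mp hJ2
      by_contra hno
      push_neg at hno
      -- every i ∈ I \ J yields a witness v adjacent to i, a, b
      have hwit : ∀ i ∈ I, i ∉ J → ∃ v, G.Adj v a ∧ G.Adj v b ∧ G.Adj v i := by
        intro i hiI hiJ
        have hm := hno i hiI hiJ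
        have hcI : (insert i J).card = 3 := by
          rw [Finset.card_insert_of_notMem hiJ]; omega
        simp only [MatG, Set.mem_setOf_eq, not_or, not_and, not_forall, not_not] at hm
        obtain ⟨v, hv⟩ := hm.2 hcI
        have hva : G.Adj v a := by
          have ha : (a : V) ∈ (↑(insert i J) : Set V) := by
            rw [hJab]; simp
          exact hv ha
        have hvb : G.Adj v b := by
          have hb : (b : V) ∈ (↑(insert i J) : Set V) := by
            rw [hJab]; simp
          exact hv hb
        have hvi : G.Adj v i := hv (by simp)
        exact ⟨v, hva, hvb, hvi⟩
      -- hence every t ∈ I has such a witness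
      obtain ⟨i₀, hi₀⟩ := hne
      rw [Finset.mem_sdiff] at hi₀
      obtain ⟨v₀, hv₀a, hv₀b, hv₀i⟩ := hwit i₀ hi₀.1 hi₀.2
      have hwitI : ∀ t ∈ I, ∃ v, G.Adj v a ∧ G.Adj v b ∧ G.Adj v t := by
        intro t htI
        by_cases htJ : t ∈ J
        · rw [hJab] at htJ
          simp only [Finset.mem_insert, Finset.mem_singleton] at htJ
          rcases htJ with rfl | rfl
          · exact ⟨v₀, hv₀a, hv₀b, hv₀a⟩
          · exact ⟨v₀, hv₀a, hv₀b, hv₀b⟩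
        · exact hwit t htI htJ
      -- apply the key lemma
      by_cases hP : ∀ t ∈ I, ∀ w, G.Adj w a → G.Adj w b → G.Adj w t
      · -- then v₀ is adjacent to all of I, contradiction
        refine hIst v₀ ?_
        intro x hx
        rw [Finset.mem_coe] at hx
        exact hP x hx v₀ hv₀a hv₀b
      · push_neg at hP
        obtain ⟨t₁, ht₁I, ht₁⟩ := hP
        obtain ⟨v₁, hv₁a, hv₁b, hv₁t⟩ := hwitI t₁ ht₁I
        have hNab : ∀ w, G.Adj w a → G.Adj w b := by
          rcases key_lemma G hrk a b t₁ v₁ hv₁a hv₁b hv₁t with h | h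
          · exact h
          · exact absurd h (by push_neg; obtain ⟨w, hwa, hwb, hwt⟩ := ht₁; exact ⟨w, hwa, hwb, hwt⟩)
        have hNba : ∀ w, G.Adj w b → G.Adj w a := by
          rcases key_lemma G hrk b a t₁ v₁ hv₁b hv₁a hv₁t with h | h
          · exact h
          · exfalso
            obtain ⟨w, hwa, hwb, hwt⟩ := ht₁
            exact hwt (h w hwb hwa)
        have : G.neighborSet a = G.neighborSet b := by
          ext w
          simp only [SimpleGraph.mem_neighborSet]
          constructor
          · intro h; exact (hNab w h.symm).symm
          · intro h; exact (hNba w h.symm).symm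
        exact hab (hsober this)
end

section
/- Let G = (V,E) be a finite sober connected simple graph with c-rk(G) = 3, and let W ⊆ V with |W| = 3. Then W is c-independent if and only if St(W) = ∅ and W is not a potential line (i.e., |W ∩ St(v)| ≥ 2 for some vertex v). -/
lemma hasWitness_iff_of_card {V : Type*} (G : SimpleGraph V) (W : Finset V) {n : ℕ}
    (h : W.card = n) :
    hasWitness G W ↔ ∃ i : Fin n → V, ∃ j : Fin n → V,
      Function.Injective i ∧ Function.Injective j ∧ (∀ r, j r ∈ W) ∧
      (∀ r, ¬ G.Adj (i r) (j r)) ∧ (∀ r s, r < s → G.Adj (i r) (j s)) := by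
  subst h; rfl

lemma four_le_crk {V : Type*} [Finite V] (G : SimpleGraph V)
    (i' j' : Fin 4 → V)
    (hd : ∀ r, ¬ G.Adj (i' r) (j' r))
    (hu : ∀ r s : Fin 4, r < s → G.Adj (i' r) (j' s)) :
    4 ≤ crk G := by
  set c : Fin 5 → Set V := fun t => starW G {w | ∃ s : Fin 4, (s : ℕ) < (t : ℕ) ∧ w = i' s}
    with hc
  have hmem : ∀ (a : Fin 5) (a' : Fin 4), (a' : ℕ) = (a : ℕ) → j' a' ∈ c a := by
    rintro a a' ha w ⟨s, hs, rfl⟩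
    have : s < a' := by rw [Fin.lt_def]; omega
    exact (hu s a' this).symm
  have hnmem : ∀ (a' : Fin 4) (b : Fin 5), (a' : ℕ) < (b : ℕ) → j' a' ∉ c b := by
    intro a' b hab hmemb
    exact hd a' ((hmemb (i' a') ⟨a', hab, rfl⟩).symm)
  have hanti : StrictAnti c := by
    intro a b hab
    have hab' : (a : ℕ) < (b : ℕ) := hab
    have hsub : c b ⊆ c a := by
      rintro x hx w ⟨s, hs, rfl⟩
      exact hx (i' s) ⟨s, by omega, rfl⟩
    set a' : Fin 4 := ⟨(a : ℕ), by omega⟩ with ha'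
    refine lt_of_le_of_ne hsub (fun h => ?_)
    exact hnmem a' b (by simp [ha']; omega) (h ▸ hmem a a' rfl)
  have h4 : 4 ∈ {k | ∃ c : Fin (k + 1) → Set V, StrictAnti c ∧ ∀ i, c i ∈ flats G} :=
    ⟨c, hanti, fun t => ⟨_, rfl⟩⟩
  have hbdd : BddAbove {k | ∃ c : Fin (k + 1) → Set V, StrictAnti c ∧ ∀ i, c i ∈ flats G} := by
    refine ⟨Nat.card (Set V), ?_⟩
    rintro m ⟨c, hsa, -⟩
    have := Nat.card_le_card_of_injective c hsa.injective
    simp [Nat.card_eq_fintype_card] at this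
    omega
  exact le_csSup hbdd h4

lemma witness_of {V : Type*} (G : SimpleGraph V)
    (W : Finset V) (hW : W.card = 3)
    (x y z : V) (hx : x ∈ W) (hy : y ∈ W) (hz : z ∈ W)
    (hxy : x ≠ y) (hxz : x ≠ z) (hyz : y ≠ z)
    (v u : V)
    (hvx : ¬ G.Adj v x) (hvy : G.Adj v y) (hvz : G.Adj v z)
    (huy : ¬ G.Adj u y) (huz : G.Adj u z) :
    hasWitness G W := by
  rw [hasWitness_iff_of_card G W hW]
  refine ⟨![v, u, z], ![x, y, z], ?_, ?_, ?_, ?_, ?_⟩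
  · have hvu : v ≠ u := fun h => huy (h ▸ hvy)
    have hvz' : v ≠ z := fun h => (G.irrefl (h ▸ hvz))
    have huz' : u ≠ z := fun h => (G.irrefl (h ▸ huz))
    intro r s h
    fin_cases r <;> fin_cases s <;> simp_all
  · intro r s h
    fin_cases r <;> fin_cases s <;> simp_all
  · intro r; fin_cases r <;> simp_all
  · intro r; fin_cases r <;> simp_all [G.irrefl]
  · intro r s h
    fin_cases r <;> fin_cases s <;> simp_all

/-- For a finite sober connected graph `G` of c-rank 3 and a 3-subset `W` of vertices:
`W` is c-independent iff `St(W) = ∅` and `W` is not a potential line (i.e. some star meets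
`W` in at least 2 vertices). -/
theorem three_subset_cIndependent_iff {V : Type*} [Fintype V] [DecidableEq V]
    (G : SimpleGraph V) [DecidableRel G.Adj]
    (hsober : Sober G) (hconn : G.Connected) (hrk : crk G = 3)
    (W : Finset V) (hW : W.card = 3) :
    hasWitness G W ↔
      (starW G (W : Set V) = ∅ ∧ ∃ v : V, 2 ≤ (W.filter fun w => G.Adj v w).card) := by
  rw [hasWitness_iff_of_card G W hW]
  constructor
  · rintro ⟨e, f, he, hf, hfW, hd, hu⟩
    constructor
    · -- starW G W = ∅
      by_contra hne
      obtain ⟨v, hv⟩ := Set.nonempty_iff_ne_empty.mpr hne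
      have hvadj : ∀ w ∈ W, G.Adj v w := hv
      set i' : Fin 4 → V := fun r => Fin.cases v e r with hi'
      set j' : Fin 4 → V := fun r => Fin.cases v f r with hj'
      have hd' : ∀ r, ¬ G.Adj (i' r) (j' r) := by
        intro r
        induction r using Fin.cases with
        | zero => simpa [hi', hj'] using G.irrefl
        | succ s => simpa [hi', hj'] using hd s
      have hu' : ∀ r s : Fin 4, r < s → G.Adj (i' r) (j' s) := by
        intro r s hrs
        induction s using Fin.cases with
        | zero => exact absurd hrs (Fin.not_lt_zero r)
        | succ t =>
          induction r using Fin.cases with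
          | zero => simpa [hi', hj'] using hvadj (f t) (hfW t)
          | succ q =>
            have : q < t := by
              rw [Fin.lt_def] at hrs ⊢
              simpa using hrs
            simpa [hi', hj'] using hu q t this
      have := four_le_crk G i' j' hd' hu'
      omega
    · -- some vertex with ≥ 2 neighbors in W
      refine ⟨e 0, ?_⟩
      have h1 : f 1 ∈ W.filter fun w => G.Adj (e 0) w :=
        Finset.mem_filter.mpr ⟨hfW 1, hu 0 1 (by decide)⟩
      have h2 : f 2 ∈ W.filter fun w => G.Adj (e 0) w :=
        Finset.mem_filter.mpr ⟨hfW 2, hu 0 2 (by decide)⟩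
      have hne12 : f 1 ≠ f 2 := fun h => by simpa using hf h
      have hsub : ({f 1, f 2} : Finset V) ⊆ W.filter fun w => G.Adj (e 0) w := by
        intro w hw
        rcases Finset.mem_insert.mp hw with h | h
        · exact h ▸ h1
        · exact (Finset.mem_singleton.mp h) ▸ h2
      calc 2 = ({f 1, f 2} : Finset V).card := (Finset.card_pair hne12).symm
        _ ≤ _ := Finset.card_le_card hsub
  · rintro ⟨hst, v, hv2⟩
    -- get x ∈ W with ¬Adj v x
    have hvnot : v ∉ starW G (W : Set V) := by rw [hst]; exact Set.notMem_empty v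
    have : ¬ ∀ w ∈ (W : Set V), G.Adj v w := hvnot
    push_neg at this
    obtain ⟨x, hxW, hvx⟩ := this
    have hxW' : x ∈ W := hxW
    -- the filter equals W.erase x
    have hsub : (W.filter fun w => G.Adj v w) ⊆ W.erase x := by
      intro w hw
      rw [Finset.mem_filter] at hw
      exact Finset.mem_erase.mpr ⟨fun h => hvx (h ▸ hw.2), hw.1⟩
    have hcard : (W.erase x).card = 2 := by
      rw [Finset.card_erase_of_mem hxW', hW]
    have heq : (W.filter fun w => G.Adj v w) = W.erase x :=
      Finset.eq_of_subset_of_card_le hsub (by omega)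
    obtain ⟨y, z, hyz, hyz'⟩ := Finset.card_eq_two.mp hcard
    have hyF : y ∈ W.filter fun w => G.Adj v w := by rw [heq, hyz']; simp
    have hzF : z ∈ W.filter fun w => G.Adj v w := by rw [heq, hyz']; simp
    have hyW : y ∈ W := (Finset.mem_filter.mp hyF).1
    have hzW : z ∈ W := (Finset.mem_filter.mp hzF).1
    have hvy : G.Adj v y := (Finset.mem_filter.mp hyF).2
    have hvz : G.Adj v z := (Finset.mem_filter.mp hzF).2
    have hxy : x ≠ y := by
      have : y ∈ W.erase x := hyz' ▸ (by simp)
      exact fun h => (Finset.mem_erase.mp this).1 h.symm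
    have hxz : x ≠ z := by
      have : z ∈ W.erase x := hyz' ▸ (by simp)
      exact fun h => (Finset.mem_erase.mp this).1 h.symm
    -- soberness: neighbor sets of y, z differ
    have hnsne : G.neighborSet y ≠ G.neighborSet z := fun h => hyz (hsober h)
    have : ¬ ∀ u, G.Adj y u ↔ G.Adj z u := by
      intro h
      exact hnsne (Set.ext fun u => by simpa using h u)
    push_neg at this
    obtain ⟨u, hu⟩ := this
    rcases hu with ⟨hyu, hzu⟩ | ⟨hyu, hzu⟩
    · -- Adj y u, ¬ Adj z u : rows (v,u,y), cols (x,z,y)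
      exact (hasWitness_iff_of_card G W hW).mp
        (witness_of G W hW x z y hxW' hzW hyW hxz hxy (Ne.symm hyz) v u hvx hvz hvy
          (fun h => hzu h.symm) hyu.symm)
    · -- Adj z u, ¬ Adj y u : rows (v,u,z), cols (x,y,z)
      exact (hasWitness_iff_of_card G W hW).mp
        (witness_of G W hW x y z hxW' hyW hzW hxy hxz hyz v u hvx hvy hvz
          (fun h => hyu h.symm) hzu.symm)
end

section
/- Let G be a finite sober connected graph of c-rank 3 with diameter less than 3. Then G has no potential lines. -/
lemma adj_of_dist_lt_three {V : Type*} (G : SimpleGraph V)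
    (hconn : G.Connected) {a b : V} (hab : a ≠ b) (hd : G.dist a b < 3)
    (hno : ∀ x, ¬(G.Adj x a ∧ G.Adj x b)) : G.Adj a b := by
  obtain ⟨w, hw⟩ := (hconn a b).exists_walk_length_eq_dist
  have hlen : w.length < 3 := hw ▸ hd
  cases w with
  | nil => exact absurd rfl hab
  | cons h w' =>
    cases w' with
    | nil => exact h
    | cons h' w'' =>
      cases w'' with
      | nil => exact absurd ⟨h.symm, h'⟩ (hno _)
      | cons h'' w''' => simp [SimpleGraph.Walk.length_cons] at hlen; omega

/-- A finite sober connected graph of c-rank 3 with diameter `< 3` has no potential lines: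
no 3-subset `P` of vertices satisfies `|P ∩ St(v)| ≤ 1` for every vertex `v`. -/
theorem no_potential_lines_of_diam_lt_three {V : Type*} [Fintype V] [DecidableEq V]
    (G : SimpleGraph V) [DecidableRel G.Adj]
    (hsober : Sober G) (hconn : G.Connected) (hrk : crk G = 3)
    (hdiam : ∀ v w : V, G.dist v w < 3) :
    ¬ ∃ P : Finset V, P.card = 3 ∧ ∀ v : V, (P.filter fun w => G.Adj v w).card ≤ 1 := by
  rintro ⟨P, hcard, hpot⟩
  obtain ⟨a, b, c, hab, hac, hbc, rfl⟩ := Finset.card_eq_three.mp hcard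
  have key : ∀ x y : V, x ∈ ({a, b, c} : Finset V) → y ∈ ({a, b, c} : Finset V) →
      x ≠ y → G.Adj x y := by
    intro x y hx hy hxy
    refine adj_of_dist_lt_three G hconn hxy (hdiam x y) ?_
    rintro z ⟨hzx, hzy⟩
    have hsub : ({x, y} : Finset V) ⊆ ({a, b, c} : Finset V).filter fun w => G.Adj z w := by
      intro u hu
      simp only [Finset.mem_insert, Finset.mem_singleton] at hu
      rcases hu with rfl | rfl <;> simp [Finset.mem_filter, hx, hy, hzx, hzy]
    have h2 : ({x, y} : Finset V).card = 2 := Finset.card_pair hxy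
    have := Finset.card_le_card hsub
    have := hpot z
    omega
  have h1 : G.Adj a b := key a b (by simp) (by simp) hab
  have h2 : G.Adj a c := key a c (by simp) (by simp) hac
  have hsub : ({b, c} : Finset V) ⊆ ({a, b, c} : Finset V).filter fun w => G.Adj a w := by
    intro u hu
    simp only [Finset.mem_insert, Finset.mem_singleton] at hu
    rcases hu with rfl | rfl <;> simp [Finset.mem_filter, h1, h2]
  have h2' : ({b, c} : Finset V).card = 2 := Finset.card_pair hbc
  have := Finset.card_le_card hsub
  have := hpot a
  omega
end

section
/- Let G = (V,E) be a finite simple graph with n vertices. Then c-rk(G) + c-rk(Ḡ) < √2 · n + 1, where Ḡ is the complement graph. -/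
/-!
If `X₀ ⊃ X₁ ⊃ ⋯ ⊃ X_m` is a chain of flats with `X_{r+1} = St(W_r)`, pick `j_r ∈ X_r \ X_{r+1}`
and `i_r ∈ W_r` not adjacent to `j_r`; since `j_s ∈ X_{r+1}` for `r < s`, `i_r` is adjacent to
`j_s`. The `m.choose 2` pairs `{i_r, j_s}`, `r < s`, are then distinct edges of `G`. Doing this for
`G` and `Gᶜ`, whose edge sets partition the `n.choose 2` pairs of vertices, gives
`a(a-1) + b(b-1) ≤ n(n-1)` for `a = c-rk G`, `b = c-rk Ḡ`, and so
`(a + b - 1)² ≤ 2(a(a-1) + b(b-1)) + 1 ≤ 2n(n-1) + 1 < 2n²`.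
-/

open Finset

theorem length_le_card_of_strictAnti {α : Type*} [Fintype α] {k : ℕ}
    {c : Fin (k + 1) → Set α} (hc : StrictAnti c) : k ≤ Fintype.card α := by
  have hcard (x : Fin (k + 1)) : (c x).ncard < Fintype.card α + 1 :=
    Nat.lt_succ_of_le ((Set.ncard_le_card _).trans_eq Nat.card_eq_fintype_card)
  have hncard : StrictAnti fun x => (c x).ncard := fun _ _ h => Set.ncard_lt_ncard (hc h)
  have hinj :
      Function.Injective fun x => (⟨(c x).ncard, hcard x⟩ : Fin (Fintype.card α + 1)) :=
    fun _ _ hxy => hncard.injective (Fin.mk.inj hxy)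
  simpa using Fintype.card_le_of_injective _ hinj

theorem exists_strictAnti_heightOf {α : Type*} [Fintype α] {F : Set (Set α)}
    (hF : F.Nonempty) :
    ∃ c : Fin (heightOf F + 1) → Set α, StrictAnti c ∧ ∀ i, c i ∈ F := by
  obtain ⟨X, hX⟩ := hF
  apply Nat.sSup_mem (s := {k | ∃ c : Fin (k + 1) → Set α, StrictAnti c ∧ ∀ i, c i ∈ F})
  · exact ⟨0, fun _ => X, Subsingleton.strictAnti (α := Fin 1) _, fun _ => hX⟩
  · exact ⟨Fintype.card α, fun k ⟨c, hc, _⟩ => length_le_card_of_strictAnti hc⟩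

namespace SimpleGraph

variable {V : Type*} (G : SimpleGraph V)

structure IsTriangularWitness {m : ℕ} (i j : Fin m → V) : Prop where
  not_adj_diag : ∀ r, ¬ G.Adj (i r) (j r)
  adj_of_lt : ∀ {r s}, r < s → G.Adj (i r) (j s)

namespace IsTriangularWitness

variable {G} {m : ℕ} {i j : Fin m → V}

theorem injective_left (h : G.IsTriangularWitness i j) : Function.Injective i := by
  intro r s hrs
  by_contra hne
  rcases lt_or_gt_of_ne hne with hlt | hlt
  · exact h.not_adj_diag s (hrs ▸ h.adj_of_lt hlt)
  · exact h.not_adj_diag r (hrs ▸ h.adj_of_lt hlt)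

theorem injective_right (h : G.IsTriangularWitness i j) : Function.Injective j := by
  intro r s hrs
  by_contra hne
  rcases lt_or_gt_of_ne hne with hlt | hlt
  · exact h.not_adj_diag r (hrs ▸ h.adj_of_lt hlt)
  · exact h.not_adj_diag s (hrs ▸ h.adj_of_lt hlt)

theorem choose_two_le_card_edgeFinset [Fintype G.edgeSet] (h : G.IsTriangularWitness i j) :
    m.choose 2 ≤ #G.edgeFinset := by
  classical
  rw [← Fintype.card_fin m, ← Fintype.card_product_filter_lt]
  refine card_le_card_of_injOn (fun p => s(i p.1, j p.2)) (fun p hp => ?_) ?_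
  · simpa using h.adj_of_lt (mem_filter.1 hp).2
  · rintro ⟨r, s⟩ hrs ⟨r', s'⟩ hrs' heq
    simp only [coe_filter, mem_univ, true_and, Set.mem_ofPred_eq] at hrs hrs'
    rcases Sym2.eq_iff.1 heq with ⟨hi, hj⟩ | ⟨hi, hj⟩
    · dsimp only at hi hj
      rw [h.injective_left hi, h.injective_right hj]
    · have hs'r : s' ≤ r := not_lt.1 fun hlt => G.irrefl (hi ▸ h.adj_of_lt hlt)
      have hsr' : s ≤ r' := not_lt.1 fun hlt => G.irrefl (hj ▸ h.adj_of_lt hlt)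
      exact absurd (hrs.trans_le hsr' |>.trans hrs' |>.trans_le hs'r) (lt_irrefl r)

end IsTriangularWitness

theorem exists_isTriangularWitness_of_strictAnti {m : ℕ} {c : Fin (m + 1) → Set V}
    (hc : StrictAnti c) (hflat : ∀ r, c r ∈ flats G) :
    ∃ i j : Fin m → V, G.IsTriangularWitness i j := by
  choose W hW using fun r : Fin m => hflat r.succ
  have hdrop (r : Fin m) : ∃ v ∈ c r.castSucc, v ∉ c r.succ :=
    Set.exists_of_ssubset (hc r.castSucc_lt_succ)
  choose j hj_mem hj_not_mem using hdrop
  have hnonadj (r : Fin m) : ∃ w ∈ W r, ¬ G.Adj (j r) w := by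
    simpa [hW r, starW] using hj_not_mem r
  choose i hi_mem hi_not_adj using hnonadj
  refine ⟨i, j, ⟨fun r h => hi_not_adj r h.symm, fun {r s} hrs => ?_⟩⟩
  have hjs : j s ∈ starW G (W r) :=
    hW r ▸ hc.antitone (Fin.succ_le_castSucc_iff.2 hrs) (hj_mem s)
  exact (hjs (i r) (hi_mem r)).symm

variable [Fintype V]

theorem card_edgeFinset_add_card_edgeFinset_compl [DecidableEq V] [DecidableRel G.Adj] :
    #G.edgeFinset + #Gᶜ.edgeFinset = (Fintype.card V).choose 2 := by
  rw [← card_union_of_disjoint (disjoint_edgeFinset.2 disjoint_compl_right), ← edgeFinset_sup]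
  convert card_edgeFinset_top_eq_card_choose_two (V := V)
  exact sup_compl_eq_top

theorem exists_strictAnti_crk :
    ∃ c : Fin (crk G + 1) → Set V, StrictAnti c ∧ ∀ i, c i ∈ flats G :=
  exists_strictAnti_heightOf ⟨starW G ∅, ∅, rfl⟩

theorem crk_le_card : crk G ≤ Fintype.card V :=
  let ⟨_, hc, _⟩ := G.exists_strictAnti_crk
  length_le_card_of_strictAnti hc

theorem choose_two_crk_le_card_edgeFinset [Fintype G.edgeSet] :
    (crk G).choose 2 ≤ #G.edgeFinset := by
  obtain ⟨c, hc, hflat⟩ := G.exists_strictAnti_crk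
  obtain ⟨i, j, h⟩ := G.exists_isTriangularWitness_of_strictAnti hc hflat
  exact h.choose_two_le_card_edgeFinset

end SimpleGraph

theorem add_lt_sqrt_two_mul_add_one {a b n : ℕ} (ha : a ≤ n) (hb : b ≤ n)
    (h : a.choose 2 + b.choose 2 ≤ n.choose 2) : (a + b : ℝ) < √2 * n + 1 := by
  rcases n.eq_zero_or_pos with rfl | hn
  · obtain rfl := Nat.le_zero.1 ha
    obtain rfl := Nat.le_zero.1 hb
    norm_num
  have hR : (a : ℝ) * (a - 1) + b * (b - 1) ≤ n * (n - 1) := by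
    have := (Nat.cast_le (α := ℝ)).2 h
    push_cast [Nat.cast_choose_two] at this
    linarith
  have hn1 : (1 : ℝ) ≤ n := by exact_mod_cast hn
  have hsq : ((a : ℝ) + b - 1) ^ 2 < (√2 * n) ^ 2 := by
    rw [mul_pow, Real.sq_sqrt zero_le_two]
    nlinarith [sq_nonneg ((a : ℝ) - b)]
  linarith [lt_of_pow_lt_pow_left₀ 2 (by positivity) hsq]

/-- For a finite simple graph `G` with `n` vertices,
`c-rk G + c-rk Ḡ < √2 · n + 1`, where `Ḡ` is the complement graph. -/
theorem crk_add_crk_compl_lt {V : Type*} [Fintype V] (G : SimpleGraph V) :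
    (crk G : ℝ) + (crk Gᶜ : ℝ) < Real.sqrt 2 * (Fintype.card V : ℝ) + 1 := by
  classical
  have hG : (crk G).choose 2 ≤ #G.edgeFinset := G.choose_two_crk_le_card_edgeFinset
  have hGc : (crk Gᶜ).choose 2 ≤ #Gᶜ.edgeFinset := Gᶜ.choose_two_crk_le_card_edgeFinset
  have hsum := G.card_edgeFinset_add_card_edgeFinset_compl
  exact add_lt_sqrt_two_mul_add_one G.crk_le_card Gᶜ.crk_le_card (by omega)
end
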